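/- With notation as before, the level K Appell-Lerch sum satisfies A_K(u,v;τ) = K^{-1} z^{(K-1)/2} ∑_{m=0}^{K-1} A_1(u, v/K + m/K + τ(K-1)/(2K); τ/K). -/

import Mathlib

open scoped BigOperators
open Complex

/-- The level `K` Appell-Lerch sum
`A_K(u,v;τ) = z^{K/2} ∑_{n∈ℤ} (-1)^{Kn} q^{Kn(n+1)/2} y^n / (1 - z q^n)`,
with `z = e^{2πiu}`, `y = e^{2πiv}`, `q = e^{2πiτ}`. -/
noncomputable def appell (K : ℕ) (u v τ : ℂ) : ℂ :=
  Complex.exp ((Real.pi : ℂ) * I * K * u) *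
    ∑' n : ℤ,
      ((-1 : ℂ) ^ ((K : ℤ) * n) *
          Complex.exp ((Real.pi : ℂ) * I * τ * K * n * (n + 1)) *
          Complex.exp (2 * (Real.pi : ℂ) * I * v * n)) /
        (1 - Complex.exp (2 * (Real.pi : ℂ) * I * (u + n * τ)))

/-!
Rescaling `τ ↦ τ / K` and `v ↦ v / K + τ (K - 1) / (2K)` turns the level-one summand at index
`K n` into the level-`K` summand at index `n`. Shifting `v` further by `m / K` multiplies the
`n`-th level-one summand by `e^{2πi m n / K}`, and summing over `m` sieves out the indices
`n ∉ K ℤ` by orthogonality of the `K`-th roots of unity. Since `Im τ > 0` makes every level-one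
series absolutely convergent, the finite sum over `m` commutes with the sum over `n`.
-/

open scoped Real
open Filter Topology

noncomputable def appellTerm (K : ℕ) (u v τ : ℂ) (n : ℤ) : ℂ :=
  ((-1 : ℂ) ^ ((K : ℤ) * n) * cexp (π * I * τ * K * n * (n + 1)) *
      cexp (2 * π * I * v * n)) /
    (1 - cexp (2 * π * I * (u + n * τ)))

lemma appell_eq_exp_mul_tsum_appellTerm (K : ℕ) (u v τ : ℂ) :
    appell K u v τ = cexp (π * I * K * u) * ∑' n : ℤ, appellTerm K u v τ n :=
  rfl

lemma appellTerm_add (K : ℕ) (u v w τ : ℂ) (n : ℤ) :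
    appellTerm K u (v + w) τ n = appellTerm K u v τ n * cexp (2 * π * I * w * n) := by
  unfold appellTerm
  rw [show 2 * π * I * (v + w) * n = 2 * π * I * v * n + 2 * π * I * w * n by ring, exp_add]
  ring

lemma appellTerm_one_rescale_mul {K : ℕ} (hK : K ≠ 0) (u v τ : ℂ) (n : ℤ) :
    appellTerm 1 u (v / K + τ * (K - 1) / (2 * K)) (τ / K) (K * n) = appellTerm K u v τ n := by
  have hK' : (K : ℂ) ≠ 0 := Nat.cast_ne_zero.mpr hK
  unfold appellTerm
  have hden : ((K * n : ℤ) : ℂ) * (τ / K) = n * τ := by push_cast; field_simp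
  have hexp : π * I * (τ / K) * (1 : ℕ) * (K * n : ℤ) * ((K * n : ℤ) + 1) +
      2 * π * I * (v / K + τ * (K - 1) / (2 * K)) * (K * n : ℤ) =
      π * I * τ * K * n * (n + 1) + 2 * π * I * v * n := by
    push_cast
    field_simp
    ring
  rw [hden, mul_assoc _ (cexp _), mul_assoc _ (cexp _), ← exp_add, ← exp_add, hexp]
  simp

lemma sum_range_exp_two_pi_I_div_mul {K : ℕ} (hK : K ≠ 0) (n : ℤ) :
    ∑ m ∈ Finset.range K, cexp (2 * π * I * (m / K) * n) =
      if (K : ℤ) ∣ n then (K : ℂ) else 0 := by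
  have hω := isPrimitiveRoot_exp K hK
  have hpow (m : ℕ) : cexp (2 * π * I * (m / K) * n) = (cexp (2 * π * I / K) ^ n) ^ m := by
    rw [← exp_int_mul, ← exp_nat_mul]
    ring_nf
  simp_rw [hpow]
  split_ifs with hn
  · simp [(hω.zpow_eq_one_iff_dvd n).mpr hn]
  · have hζK : (cexp (2 * π * I / K) ^ n) ^ K = 1 := by
      rw [← zpow_natCast, ← zpow_mul, mul_comm n, zpow_mul, zpow_natCast, hω.pow_eq_one,
        one_zpow]
    rw [geom_sum_eq (mt (hω.zpow_eq_one_iff_dvd n).mp hn), hζK, sub_self, zero_div]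

lemma tsum_mul_sum_range_exp {K : ℕ} (hK : K ≠ 0) (g : ℤ → ℂ) :
    ∑' n : ℤ, g n * ∑ m ∈ Finset.range K, cexp (2 * π * I * (m / K) * n) =
      K * ∑' n : ℤ, g (K * n) := by
  simp_rw [sum_range_exp_two_pi_I_div_mul hK, mul_ite, mul_zero]
  have hinj : Function.Injective fun n : ℤ => (K : ℤ) * n :=
    mul_right_injective₀ (Int.natCast_ne_zero.mpr hK)
  have hsupp : Function.support (fun n : ℤ => if (K : ℤ) ∣ n then g n * K else 0) ⊆
      Set.range fun n : ℤ => (K : ℤ) * n := fun n hn => by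
    by_contra h
    exact hn (if_neg fun ⟨k, hk⟩ => h ⟨k, hk.symm⟩)
  rw [← hinj.tsum_eq hsupp]
  simp only [dvd_mul_right, if_true, tsum_mul_right]
  exact mul_comm _ _

lemma norm_exp_two_pi_I_mul (u τ : ℂ) (n : ℤ) :
    ‖cexp (2 * π * I * (u + n * τ))‖ = Real.exp (-(2 * π * (u.im + n * τ.im))) := by
  rw [norm_exp]
  congr 1
  simp [mul_re, mul_im]

lemma eventually_half_le_norm_one_sub_exp (u : ℂ) {τ : ℂ} (hτ : 0 < τ.im) :
    ∀ᶠ n : ℤ in cofinite, 1 / 2 ≤ ‖1 - cexp (2 * π * I * (u + n * τ))‖ := by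
  have hatTop : Tendsto (fun n : ℤ => 2 * π * (u.im + n * τ.im)) atTop atTop :=
    (tendsto_atTop_add_const_left _ _
      (tendsto_intCast_atTop_atTop.atTop_mul_const hτ)).const_mul_atTop Real.two_pi_pos
  have hatBot : Tendsto (fun n : ℤ => 2 * π * (u.im + n * τ.im)) atBot atBot :=
    (tendsto_atBot_add_const_left _ _
      ((tendsto_intCast_atBot_iff.mpr tendsto_id).atBot_mul_const hτ)).const_mul_atBot
        Real.two_pi_pos
  simp_rw [Int.cofinite_eq, eventually_sup]
  constructor
  · have hbig : Tendsto (fun n : ℤ => ‖cexp (2 * π * I * (u + n * τ))‖) atBot atTop := by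
      simp_rw [norm_exp_two_pi_I_mul]
      exact Real.tendsto_exp_atTop.comp (tendsto_neg_atBot_atTop.comp hatBot)
    filter_upwards [hbig.eventually_ge_atTop 2] with n hn
    rw [norm_sub_rev]
    linarith [norm_sub_norm_le (cexp (2 * π * I * (u + n * τ))) 1, norm_one (α := ℂ)]
  · have hsmall :
        Tendsto (fun n : ℤ => ‖cexp (2 * π * I * (u + n * τ))‖) atTop (𝓝 0) := by
      simp_rw [norm_exp_two_pi_I_mul]
      exact Real.tendsto_exp_atBot.comp (tendsto_neg_atTop_atBot.comp hatTop)
    filter_upwards [hsmall.eventually (ge_mem_nhds (by norm_num : (0 : ℝ) < 1 / 2))] with n hn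
    linarith [norm_sub_norm_le (1 : ℂ) (cexp (2 * π * I * (u + n * τ))), norm_one (α := ℂ)]

lemma norm_appellTerm_numerator (K : ℕ) (v τ : ℂ) (n : ℤ) :
    ‖(-1 : ℂ) ^ ((K : ℤ) * n) * cexp (π * I * τ * K * n * (n + 1)) *
        cexp (2 * π * I * v * n)‖ =
      ‖jacobiTheta₂_term n (v + K * τ / 2) (K * τ)‖ := by
  rw [norm_mul, norm_mul, norm_zpow, norm_neg, norm_one, one_zpow, one_mul, ← norm_mul,
    ← exp_add, jacobiTheta₂_term]
  congr 2
  ring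

lemma summable_appellTerm {K : ℕ} (hK : K ≠ 0) (u v : ℂ) {τ : ℂ} (hτ : 0 < τ.im) :
    Summable (appellTerm K u v τ) := by
  have hKτ : 0 < (K * τ).im := by
    simpa using mul_pos (Nat.cast_pos.mpr (Nat.pos_of_ne_zero hK)) hτ
  have hθ := ((summable_jacobiTheta₂_term_iff (v + K * τ / 2) (K * τ)).mpr hKτ).norm
  refine .of_norm_bounded_eventually (hθ.mul_left 2) ?_
  filter_upwards [eventually_half_le_norm_one_sub_exp u hτ] with n hn
  rw [appellTerm, norm_div, norm_appellTerm_numerator, div_le_iff₀ (by linarith)]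
  nlinarith [norm_nonneg (jacobiTheta₂_term n (v + K * τ / 2) (K * τ))]

theorem appell_level_K_eq_inv_K_sum_level_one_general (K : ℕ) (hK : 0 < K) (u v τ : ℂ)
    (hτ : 0 < τ.im) :
    appell K u v τ =
      (K : ℂ)⁻¹ * Complex.exp ((Real.pi : ℂ) * I * ((K : ℂ) - 1) * u) *
        ∑ m ∈ Finset.range K,
          appell 1 u (v / K + m / K + τ * ((K : ℂ) - 1) / (2 * K)) (τ / K) := by
  have hK' : (K : ℂ) ≠ 0 := Nat.cast_ne_zero.mpr hK.ne'
  have hτK : 0 < (τ / K).im := by simpa using div_pos hτ (Nat.cast_pos.mpr hK)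
  set v' := v / K + τ * ((K : ℂ) - 1) / (2 * K)
  have hv' (m : ℕ) : v / K + m / K + τ * ((K : ℂ) - 1) / (2 * K) = v' + m / K := by ring
  have hexp :
      cexp (π * I * K * u) = cexp (π * I * (K - 1) * u) * cexp (π * I * (1 : ℕ) * u) := by
    rw [← exp_add]
    congr 1
    push_cast
    ring
  calc appell K u v τ
        = cexp (π * I * K * u) * ∑' n : ℤ, appellTerm 1 u v' (τ / K) (K * n) := by
        rw [appell_eq_exp_mul_tsum_appellTerm]
        exact congrArg _ (tsum_congr fun n => (appellTerm_one_rescale_mul hK.ne' u v τ n).symm)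
    _ = cexp (π * I * K * u) * (K : ℂ)⁻¹ *
          ∑' n : ℤ, ∑ m ∈ Finset.range K, appellTerm 1 u (v' + m / K) (τ / K) n := by
        simp_rw [appellTerm_add, ← Finset.mul_sum, tsum_mul_sum_range_exp hK.ne']
        field_simp
    _ = _ := by
        rw [Summable.tsum_finsetSum fun m _ => summable_appellTerm one_ne_zero _ _ hτK]
        simp only [hv', appell_eq_exp_mul_tsum_appellTerm, ← Finset.mul_sum, hexp]
        ring

theorem appell_level_K_eq_inv_K_sum_level_one (K : ℕ) (hK : 0 < K) (u v τ : ℂ)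
    (hτ : 0 < τ.im)
    (hz : ∀ n : ℤ, 1 - Complex.exp (2 * (Real.pi : ℂ) * I * (u + n * τ)) ≠ 0) :
    appell K u v τ =
      (K : ℂ)⁻¹ * Complex.exp ((Real.pi : ℂ) * I * ((K : ℂ) - 1) * u) *
        ∑ m ∈ Finset.range K,
          appell 1 u (v / K + m / K + τ * ((K : ℂ) - 1) / (2 * K)) (τ / K) :=
  appell_level_K_eq_inv_K_sum_level_one_general K hK u v τ hτ
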